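/- For every integer k ≥ 2 and every w > 0, the joint law μ_k of two consecutive states (X_k, X_{k+1}) of the Kendall random walk with α = 1 and unit step δ_1 satisfies μ_k({(u,v) ∈ ℝ² : v − u < w}) = 1 − k(k−1) ∫_1^∞ (u−1)^{k−2} u^{−k} (u+w)^{−2} du; in particular the distribution of the increment X_{k+1} − X_k depends on k, so the increments are not stationary. -/

import Mathlib

/-!
Given `X_k = u > 1`, the increment `X_{k+1} - X_k` is at least `w` exactly when the scaled
Pareto jump lands in `[u + w, ∞)`, which has `K(u, ·)`-probability `u⁻¹ ((u + w) / u)⁻² =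
u / (u + w)²`. Integrating this against the density of `λ_k` gives the formula for the
complementary event.

For large `w` the tail `k (k - 1) ∫ …` behaves like `E[X_k] / w²`, and
`E[X_2] = 2 < 3 = E[X_3]`. At `w = 150` the crude bound `∫ … ≤ w⁻²` for `k = 2`, and the
truncation of the `k = 3` integral to `(1, 10]`, already separate the two laws.
-/

open MeasureTheory Set

/-- The Pareto probability measure `π_2`, with density `2 x⁻³ 1_{(1,∞)}(x)`. -/
noncomputable def pareto2 : Measure ℝ :=
  volume.withDensity (fun x => ENNReal.ofReal (if 1 < x then 2 / x ^ 3 else 0))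

/-- The distribution `λ_k = δ_1^{△_1 k}` of the state `X_k` of the Kendall random walk
(`α = 1`, unit step `δ_1`), with density `k (k-1) x⁻³ (1 - 1/x)^(k-2) 1_{(1,∞)}(x)`
for `k ≥ 2`. -/
noncomputable def lamK (k : ℕ) : Measure ℝ :=
  volume.withDensity (fun x => ENNReal.ofReal
    (if 1 < x then (k : ℝ) * ((k : ℝ) - 1) / x ^ 3 * (1 - 1 / x) ^ (k - 2) else 0))

/-- The one-step transition kernel `K(u, ·) = u⁻¹ (T_u π_2) + (1 - u⁻¹) δ_u` of the
Kendall random walk with `α = 1` and unit step `δ_1`. -/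
noncomputable def kendallStep (u : ℝ) : Measure ℝ :=
  ENNReal.ofReal u⁻¹ • Measure.map (fun x => u * x) pareto2
    + ENNReal.ofReal (1 - u⁻¹) • Measure.dirac u

/-- The joint law `μ_k = λ_k ⊗ K` of two consecutive states `(X_k, X_{k+1})`:
`μ_k(C) = ∫ K(u, {v : (u,v) ∈ C}) λ_k(du)`. -/
noncomputable def jointLaw (k : ℕ) : Measure (ℝ × ℝ) :=
  (lamK k).bind (fun u => (kendallStep u).map (fun v => (u, v)))

open Filter Topology

lemma withDensity_ofReal_ite_one_lt (f : ℝ → ℝ) :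
    volume.withDensity (fun x => ENNReal.ofReal (if 1 < x then f x else 0))
      = (volume.restrict (Ioi 1)).withDensity (fun x => ENNReal.ofReal (f x)) := by
  rw [← withDensity_indicator measurableSet_Ioi]
  congr with x
  by_cases hx : 1 < x <;> simp [hx]

lemma lintegral_Ioi_ofReal_of_hasDerivAt_of_nonneg {g g' : ℝ → ℝ} {a l : ℝ}
    (hcont : ContinuousWithinAt g (Ici a) a) (hderiv : ∀ x ∈ Ioi a, HasDerivAt g (g' x) x)
    (g'pos : ∀ x ∈ Ioi a, 0 ≤ g' x) (hg : Tendsto g atTop (𝓝 l)) :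
    ∫⁻ x in Ioi a, ENNReal.ofReal (g' x) = ENNReal.ofReal (l - g a) := by
  rw [← integral_Ioi_of_hasDerivAt_of_nonneg hcont hderiv g'pos hg,
    ofReal_integral_eq_lintegral_ofReal (integrableOn_Ioi_deriv_of_nonneg hcont hderiv g'pos hg)
      ((ae_restrict_iff' measurableSet_Ioi).2 (.of_forall g'pos))]

lemma integrableOn_Ioi_inv_sq : IntegrableOn (fun u : ℝ => (u ^ 2)⁻¹) (Ioi 1) := by
  simpa using integrableOn_Ioi_rpow_of_lt (by norm_num : (-2 : ℝ) < -1) one_pos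

lemma integral_Ioi_inv_sq : ∫ u in Ioi (1 : ℝ), (u ^ 2)⁻¹ = 1 := by
  have h := integral_Ioi_rpow_of_lt (by norm_num : (-2 : ℝ) < -1) one_pos
  norm_num at h
  exact h

lemma cast_mul_cast_sub_one_nonneg (k : ℕ) : 0 ≤ (k : ℝ) * ((k : ℝ) - 1) := by
  rcases Nat.eq_zero_or_pos k with rfl | hk
  · simp
  · exact mul_nonneg k.cast_nonneg (sub_nonneg.2 (Nat.one_le_cast.2 hk))

lemma lintegral_Ioi_two_div_pow_three {c : ℝ} (hc : 0 < c) :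
    ∫⁻ x in Ioi c, ENNReal.ofReal (2 / x ^ 3) = ENNReal.ofReal (c ^ 2)⁻¹ := by
  have hderiv : ∀ x ∈ Ioi c, HasDerivAt (fun x : ℝ => -(x ^ 2)⁻¹) (2 / x ^ 3) x := by
    intro x hx
    have hx0 : x ≠ 0 := (hc.trans hx).ne'
    refine ((hasDerivAt_pow 2 x).inv (pow_ne_zero 2 hx0)).neg.congr_deriv ?_
    field_simp
    ring
  have hlim : Tendsto (fun x : ℝ => -(x ^ 2)⁻¹) atTop (𝓝 0) := by
    simpa using ((tendsto_pow_atTop (α := ℝ) two_ne_zero).inv_tendsto_atTop).neg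
  rw [lintegral_Ioi_ofReal_of_hasDerivAt_of_nonneg (by fun_prop (disch := positivity)) hderiv
    (fun x hx => by have := hc.trans hx; positivity) hlim]
  simp

lemma pareto2_eq :
    pareto2 = (volume.restrict (Ioi 1)).withDensity (fun x => ENNReal.ofReal (2 / x ^ 3)) :=
  withDensity_ofReal_ite_one_lt _

instance isProbabilityMeasure_pareto2 : IsProbabilityMeasure pareto2 :=
  ⟨by rw [pareto2_eq, withDensity_apply _ .univ, Measure.restrict_univ,
    lintegral_Ioi_two_div_pow_three one_pos]; simp⟩

lemma pareto2_Ici {c : ℝ} (hc : 1 < c) : pareto2 (Ici c) = ENNReal.ofReal (c ^ 2)⁻¹ := by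
  rw [pareto2_eq, withDensity_apply _ measurableSet_Ici,
    Measure.restrict_restrict measurableSet_Ici, inter_eq_left.2 (Ici_subset_Ioi.2 hc),
    setLIntegral_congr Ioi_ae_eq_Ici.symm, lintegral_Ioi_two_div_pow_three (by linarith)]

lemma isProbabilityMeasure_kendallStep {u : ℝ} (hu : 1 ≤ u) :
    IsProbabilityMeasure (kendallStep u) := by
  constructor
  rw [kendallStep, Measure.add_apply, Measure.smul_apply, Measure.smul_apply,
    Measure.map_apply (measurable_const_mul u) .univ, preimage_univ, measure_univ,
    measure_univ, smul_eq_mul, smul_eq_mul, mul_one, mul_one,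
    ← ENNReal.ofReal_add (by positivity) (sub_nonneg.2 (inv_le_one_of_one_le₀ hu))]
  simp

lemma kendallStep_Ici {u w : ℝ} (hu : 1 ≤ u) (hw : 0 < w) :
    kendallStep u (Ici (u + w)) = ENNReal.ofReal (u / (u + w) ^ 2) := by
  have hu0 : 0 < u := by linarith
  have hpre : (fun x => u * x) ⁻¹' Ici (u + w) = Ici ((u + w) / u) := by
    ext x
    simp [div_le_iff₀' hu0]
  rw [kendallStep, Measure.add_apply, Measure.smul_apply, Measure.smul_apply,
    Measure.map_apply (measurable_const_mul u) measurableSet_Ici, hpre,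
    pareto2_Ici ((one_lt_div hu0).2 (by linarith)),
    Measure.dirac_apply' _ measurableSet_Ici, indicator_of_notMem (by simpa using hw),
    smul_eq_mul, smul_eq_mul, mul_zero, add_zero, ← ENNReal.ofReal_mul (by positivity)]
  congr 1
  field_simp

noncomputable def lamKDensity (k : ℕ) (x : ℝ) : ℝ :=
  (k : ℝ) * ((k : ℝ) - 1) / x ^ 3 * (1 - 1 / x) ^ (k - 2)

noncomputable def lamKCdf (k : ℕ) (x : ℝ) : ℝ :=
  k * (1 - 1 / x) ^ (k - 1) - (k - 1) * (1 - 1 / x) ^ k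

lemma lamKDensity_nonneg (k : ℕ) {x : ℝ} (hx : 1 ≤ x) : 0 ≤ lamKDensity k x :=
  mul_nonneg (div_nonneg (cast_mul_cast_sub_one_nonneg k) (by positivity))
    (pow_nonneg (sub_nonneg.2 ((div_le_one (by linarith)).2 hx)) _)

lemma hasDerivAt_lamKCdf {k : ℕ} (hk : 2 ≤ k) {x : ℝ} (hx : x ≠ 0) :
    HasDerivAt (lamKCdf k) (lamKDensity k x) x := by
  have ht : HasDerivAt (fun x : ℝ => 1 - 1 / x) (1 / x ^ 2) x := by
    simpa using (hasDerivAt_inv hx).const_sub 1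
  refine (((ht.pow (k - 1)).const_mul (k : ℝ)).sub
    ((ht.pow k).const_mul ((k : ℝ) - 1))).congr_deriv ?_
  obtain ⟨n, rfl⟩ : ∃ n, k = n + 2 := ⟨k - 2, by omega⟩
  simp only [lamKDensity, Nat.add_sub_cancel, show n + 2 - 1 = n + 1 by omega, Nat.cast_add,
    Nat.cast_ofNat, Nat.cast_one, pow_succ]
  field_simp
  ring

lemma tendsto_lamKCdf_atTop (k : ℕ) : Tendsto (lamKCdf k) atTop (𝓝 1) := by
  have ht : Tendsto (fun x : ℝ => 1 - 1 / x) atTop (𝓝 1) := by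
    simpa using (tendsto_const_nhds (x := (1 : ℝ))).sub tendsto_inv_atTop_zero
  unfold lamKCdf
  simpa using ((ht.pow (k - 1)).const_mul (k : ℝ)).sub ((ht.pow k).const_mul ((k : ℝ) - 1))

lemma lamKCdf_one {k : ℕ} (hk : 2 ≤ k) : lamKCdf k 1 = 0 := by
  simp [lamKCdf, zero_pow (by omega : k - 1 ≠ 0), zero_pow (by omega : k ≠ 0)]

lemma lintegral_lamKDensity {k : ℕ} (hk : 2 ≤ k) :
    ∫⁻ x in Ioi 1, ENNReal.ofReal (lamKDensity k x) = 1 := by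
  rw [lintegral_Ioi_ofReal_of_hasDerivAt_of_nonneg
    (hasDerivAt_lamKCdf hk one_ne_zero).continuousAt.continuousWithinAt
    (fun x hx => hasDerivAt_lamKCdf hk (zero_lt_one.trans hx).ne')
    (fun x hx => lamKDensity_nonneg k (le_of_lt hx)) (tendsto_lamKCdf_atTop k),
    lamKCdf_one hk]
  simp

lemma lamK_eq (k : ℕ) :
    lamK k = (volume.restrict (Ioi 1)).withDensity (fun x => ENNReal.ofReal (lamKDensity k x)) :=
  withDensity_ofReal_ite_one_lt _

lemma isProbabilityMeasure_lamK {k : ℕ} (hk : 2 ≤ k) : IsProbabilityMeasure (lamK k) :=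
  ⟨by rw [lamK_eq, withDensity_apply _ .univ, Measure.restrict_univ, lintegral_lamKDensity hk]⟩

lemma ae_lamK_one_lt (k : ℕ) : ∀ᵐ u ∂lamK k, 1 < u := by
  rw [lamK_eq]
  exact (withDensity_absolutelyContinuous _ _).ae_le (ae_restrict_mem measurableSet_Ioi)

lemma measurable_map_prodMk_kendallStep :
    Measurable fun u : ℝ => (kendallStep u).map (fun v => (u, v)) := by
  refine Measure.measurable_of_measurable_coe _ fun s hs => ?_
  simp_rw [Measure.map_apply measurable_prodMk_left hs, kendallStep, Measure.add_apply,
    Measure.smul_apply, smul_eq_mul]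
  refine .add (.mul (by fun_prop) ?_) (.mul (by fun_prop) ?_)
  · simp_rw [Measure.map_apply (measurable_const_mul _) (measurable_prodMk_left hs)]
    -- `{x | (u, u * x) ∈ s}` is the section at `u` of the preimage of `s` under
    -- `(u, x) ↦ (u, u * x)`
    exact measurable_measure_prodMk_left
      ((measurable_fst.prodMk (measurable_fst.mul measurable_snd)) hs)
  · simp_rw [Measure.dirac_apply' _ (measurable_prodMk_left hs)]
    exact (measurable_one.indicator hs).comp (measurable_id.prodMk measurable_id)

lemma isProbabilityMeasure_jointLaw {k : ℕ} (hk : 2 ≤ k) : IsProbabilityMeasure (jointLaw k) :=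
  have := isProbabilityMeasure_lamK hk
  isProbabilityMeasure_bind measurable_map_prodMk_kendallStep.aemeasurable
    ((ae_lamK_one_lt k).mono fun _ hu =>
      have := isProbabilityMeasure_kendallStep hu.le
      Measure.isProbabilityMeasure_map measurable_prodMk_left.aemeasurable)

lemma jointLaw_apply_prodMk_preimage (k : ℕ) {s : Set (ℝ × ℝ)} (hs : MeasurableSet s) :
    jointLaw k s = ∫⁻ u, kendallStep u (Prod.mk u ⁻¹' s) ∂lamK k := by
  rw [jointLaw, Measure.bind_apply hs measurable_map_prodMk_kendallStep.aemeasurable]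
  simp_rw [Measure.map_apply measurable_prodMk_left hs]

noncomputable def incrementIntegrand (k : ℕ) (w u : ℝ) : ℝ :=
  (u - 1) ^ (k - 2) / (u ^ k * (u + w) ^ 2)

lemma incrementIntegrand_nonneg (k : ℕ) {u w : ℝ} (hu : 1 ≤ u) (hw : 0 ≤ w) :
    0 ≤ incrementIntegrand k w u :=
  div_nonneg (pow_nonneg (by linarith) _) (by positivity)

lemma incrementIntegrand_le {k : ℕ} (hk : 2 ≤ k) {u w : ℝ} (hu : 1 ≤ u) (hw : 0 < w) :
    incrementIntegrand k w u ≤ (w ^ 2)⁻¹ * (u ^ 2)⁻¹ := by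
  have hu0 : 0 < u := by linarith
  rw [incrementIntegrand, ← mul_inv, div_le_iff₀ (by positivity), inv_mul_eq_div,
    le_div_iff₀ (by positivity),
    show u ^ k = u ^ (k - 2) * u ^ 2 by rw [← pow_add, Nat.sub_add_cancel hk]]
  have h1 : (u - 1) ^ (k - 2) ≤ u ^ (k - 2) := pow_le_pow_left₀ (by linarith) (by linarith) _
  have h2 : w ^ 2 ≤ (u + w) ^ 2 := pow_le_pow_left₀ hw.le (by linarith) 2
  calc (u - 1) ^ (k - 2) * (w ^ 2 * u ^ 2) ≤ u ^ (k - 2) * ((u + w) ^ 2 * u ^ 2) := by gcongr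
    _ = _ := by ring

lemma integrableOn_incrementIntegrand {k : ℕ} (hk : 2 ≤ k) {w : ℝ} (hw : 0 < w) :
    IntegrableOn (incrementIntegrand k w) (Ioi 1) := by
  refine (integrableOn_Ioi_inv_sq.const_mul (w ^ 2)⁻¹).mono'
    (by unfold incrementIntegrand; fun_prop : Measurable _).aestronglyMeasurable
    ((ae_restrict_iff' measurableSet_Ioi).2 (.of_forall fun u hu => ?_))
  rw [Real.norm_of_nonneg (incrementIntegrand_nonneg k (le_of_lt hu) hw.le)]
  exact incrementIntegrand_le hk (le_of_lt hu) hw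

lemma integral_incrementIntegrand_le {k : ℕ} (hk : 2 ≤ k) {w : ℝ} (hw : 0 < w) :
    ∫ u in Ioi 1, incrementIntegrand k w u ≤ (w ^ 2)⁻¹ := by
  calc _ ≤ ∫ u in Ioi 1, (w ^ 2)⁻¹ * (u ^ 2)⁻¹ :=
        setIntegral_mono_on (integrableOn_incrementIntegrand hk hw)
          (integrableOn_Ioi_inv_sq.const_mul _) measurableSet_Ioi
          fun u hu => incrementIntegrand_le hk (le_of_lt hu) hw
    _ = (w ^ 2)⁻¹ := by rw [integral_const_mul, integral_Ioi_inv_sq, mul_one]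

lemma integral_Ioc_sub_one_div_pow_three {a : ℝ} (ha : 1 ≤ a) :
    ∫ u in Ioc 1 a, (u - 1) / u ^ 3 = (a - 1) ^ 2 / (2 * a ^ 2) := by
  have hpos : ∀ x ∈ uIcc 1 a, 0 < x := fun x hx => by
    rw [uIcc_of_le ha] at hx
    linarith [hx.1]
  have hderiv : ∀ x ∈ uIcc 1 a,
      HasDerivAt (fun x : ℝ => -x⁻¹ + (2 * x ^ 2)⁻¹) ((x - 1) / x ^ 3) x := by
    intro x hx
    have hx0 := (hpos x hx).ne'
    refine ((hasDerivAt_inv hx0).neg.add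
      (((hasDerivAt_pow 2 x).const_mul 2).inv (by positivity))).congr_deriv ?_
    field_simp
    ring
  have hcont : ContinuousOn (fun x : ℝ => (x - 1) / x ^ 3) (uIcc 1 a) :=
    ContinuousOn.div (by fun_prop) (by fun_prop) fun x hx => (pow_pos (hpos x hx) 3).ne'
  rw [← intervalIntegral.integral_of_le ha,
    intervalIntegral.integral_eq_sub_of_hasDerivAt hderiv hcont.intervalIntegrable]
  field_simp
  ring

lemma le_integral_incrementIntegrand_three {a w : ℝ} (ha : 1 ≤ a) (hw : 0 < w) :
    (a - 1) ^ 2 / (2 * a ^ 2 * (a + w) ^ 2) ≤ ∫ u in Ioi 1, incrementIntegrand 3 w u := by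
  have hcont : ContinuousOn (fun u : ℝ => ((a + w) ^ 2)⁻¹ * ((u - 1) / u ^ 3)) (Icc 1 a) :=
    continuousOn_const.mul (ContinuousOn.div (by fun_prop) (by fun_prop)
      fun u hu => (pow_pos (zero_lt_one.trans_le hu.1) 3).ne')
  have hle : ∀ u ∈ Ioc 1 a,
      ((a + w) ^ 2)⁻¹ * ((u - 1) / u ^ 3) ≤ incrementIntegrand 3 w u := by
    intro u hu
    have hu0 : 0 < u := zero_lt_one.trans hu.1
    rw [incrementIntegrand, inv_mul_eq_div, div_div, pow_one]
    exact div_le_div_of_nonneg_left (by linarith [hu.1]) (by positivity) (by gcongr; exact hu.2)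
  have hint := integrableOn_incrementIntegrand (k := 3) (by norm_num) hw
  calc (a - 1) ^ 2 / (2 * a ^ 2 * (a + w) ^ 2)
      = ((a + w) ^ 2)⁻¹ * ∫ u in Ioc 1 a, (u - 1) / u ^ 3 := by
        rw [integral_Ioc_sub_one_div_pow_three ha]
        field_simp
    _ = ∫ u in Ioc 1 a, ((a + w) ^ 2)⁻¹ * ((u - 1) / u ^ 3) := (integral_const_mul _ _).symm
    _ ≤ ∫ u in Ioc 1 a, incrementIntegrand 3 w u :=
        setIntegral_mono_on (hcont.integrableOn_Icc.mono_set Ioc_subset_Icc_self)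
          (hint.mono_set Ioc_subset_Ioi_self) measurableSet_Ioc hle
    _ ≤ ∫ u in Ioi 1, incrementIntegrand 3 w u :=
        setIntegral_mono_set hint
          ((ae_restrict_iff' measurableSet_Ioi).2
            (.of_forall fun u hu => incrementIntegrand_nonneg 3 (le_of_lt hu) hw.le))
          Ioc_subset_Ioi_self.eventuallyLE

lemma lamKDensity_mul_eq {k : ℕ} (hk : 2 ≤ k) {u w : ℝ} (hu : u ≠ 0) (huw : u + w ≠ 0) :
    lamKDensity k u * (u / (u + w) ^ 2) = k * (k - 1) * incrementIntegrand k w u := by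
  obtain ⟨n, rfl⟩ : ∃ n, k = n + 2 := ⟨k - 2, by omega⟩
  rw [lamKDensity, incrementIntegrand, Nat.add_sub_cancel, one_sub_div hu, div_pow]
  field_simp
  push_cast
  ring

lemma jointLaw_increment_ge {k : ℕ} (hk : 2 ≤ k) {w : ℝ} (hw : 0 < w) :
    jointLaw k {p : ℝ × ℝ | w ≤ p.2 - p.1}
      = ENNReal.ofReal (k * (k - 1) * ∫ u in Ioi 1, incrementIntegrand k w u) := by
  have hpre (u : ℝ) : Prod.mk u ⁻¹' {p : ℝ × ℝ | w ≤ p.2 - p.1} = Ici (u + w) := by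
    ext v
    simp [le_sub_iff_add_le']
  rw [jointLaw_apply_prodMk_preimage k (measurableSet_le measurable_const (by fun_prop))]
  simp_rw [hpre]
  rw [lintegral_congr_ae ((ae_lamK_one_lt k).mono fun u hu => kendallStep_Ici hu.le hw), lamK_eq,
    lintegral_withDensity_eq_lintegral_mul _ (by unfold lamKDensity; fun_prop) (by fun_prop),
    ← integral_const_mul, ofReal_integral_eq_lintegral_ofReal
      ((integrableOn_incrementIntegrand hk hw).const_mul _)
      ((ae_restrict_iff' measurableSet_Ioi).2 (.of_forall fun u hu => ?_))]
  · refine setLIntegral_congr_fun measurableSet_Ioi fun u hu => ?_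
    have hu0 : (0 : ℝ) < u := zero_lt_one.trans hu
    rw [Pi.mul_apply, ← ENNReal.ofReal_mul (lamKDensity_nonneg k (le_of_lt hu)),
      lamKDensity_mul_eq hk hu0.ne' (by positivity)]
  · exact mul_nonneg (cast_mul_cast_sub_one_nonneg k)
      (incrementIntegrand_nonneg k (le_of_lt hu) hw.le)

lemma jointLaw_increment_lt {k : ℕ} (hk : 2 ≤ k) {w : ℝ} (hw : 0 < w) :
    jointLaw k {p : ℝ × ℝ | p.2 - p.1 < w}
      = ENNReal.ofReal (1 - k * (k - 1) * ∫ u in Ioi 1, incrementIntegrand k w u) := by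
  have := isProbabilityMeasure_jointLaw hk
  have hcompl : {p : ℝ × ℝ | p.2 - p.1 < w} = {p : ℝ × ℝ | w ≤ p.2 - p.1}ᶜ := by
    ext
    simp
  have hnonneg : 0 ≤ k * (k - 1) * ∫ u in Ioi 1, incrementIntegrand k w u :=
    mul_nonneg (cast_mul_cast_sub_one_nonneg k) (setIntegral_nonneg measurableSet_Ioi
      fun u hu => incrementIntegrand_nonneg k (le_of_lt hu) hw.le)
  rw [hcompl, prob_compl_eq_one_sub (measurableSet_le measurable_const (by fun_prop)),
    jointLaw_increment_ge hk hw, ENNReal.ofReal_sub _ hnonneg, ENNReal.ofReal_one]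

theorem jointLaw_increment_not_stationary :
    (∀ k : ℕ, 2 ≤ k → ∀ w : ℝ, 0 < w →
      jointLaw k {p : ℝ × ℝ | p.2 - p.1 < w}
        = ENNReal.ofReal (1 - (k : ℝ) * ((k : ℝ) - 1)
            * ∫ u in Set.Ioi (1:ℝ), (u - 1) ^ (k - 2) / (u ^ k * (u + w) ^ 2)))
    ∧ ∃ k l : ℕ, 2 ≤ k ∧ 2 ≤ l ∧ ∃ w : ℝ, 0 < w ∧
        jointLaw k {p : ℝ × ℝ | p.2 - p.1 < w}
          ≠ jointLaw l {p : ℝ × ℝ | p.2 - p.1 < w} := by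
  refine ⟨fun k hk w hw => jointLaw_increment_lt hk hw, 2, 3, le_rfl, by norm_num, 150,
    by norm_num, ?_⟩
  have h2 := integral_incrementIntegrand_le (k := 2) le_rfl (w := 150) (by norm_num)
  have h3 := le_integral_incrementIntegrand_three (a := 10) (w := 150) (by norm_num) (by norm_num)
  rw [jointLaw_increment_lt le_rfl (by norm_num), jointLaw_increment_lt (by norm_num) (by norm_num)]
  norm_num at h2 h3 ⊢
  refine ((ENNReal.ofReal_lt_ofReal_iff ?_).2 ?_).ne' <;> linarith
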